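/- Let X be a measurable space, n ∈ ℕ, and V a set of measurable functions g : (Fin n → X) → [0,∞] each of which is symmetric, i.e. g(x ∘ σ) = g(x) for every permutation σ of Fin n. For a symmetric measurable g, let eq\g : X^{(n)} → [0,∞] denote the induced measurable function on the symmetric power, characterised by (eq\g) ∘ F = g. Then { eq\g | g ∈ V°° and g symmetric } = ({ eq\g | g ∈ V })°°, where the polar of V is taken among s-finite measures on Fin n → X and the polars on the right-hand side among s-finite measures on X^{(n)} and measurable functions on X^{(n)}. -/

import Mathlib

open MeasureTheory
open scoped ENNReal

/-- The polar of a set of `[0,∞]`-valued functions on `W`: the s-finite measures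
integrating every member to at most `1`. -/
def funPolar {W : Type*} [MeasurableSpace W] (G : Set (W → ℝ≥0∞)) : Set (Measure W) :=
  {μ | SFinite μ ∧ ∀ g ∈ G, ∫⁻ w, g w ∂μ ≤ 1}

/-- The polar of a set of measures on `W`: the measurable `[0,∞]`-valued functions
integrating to at most `1` against every member. -/
def measPolar {W : Type*} [MeasurableSpace W] (M : Set (Measure W)) : Set (W → ℝ≥0∞) :=
  {f | Measurable f ∧ ∀ μ ∈ M, ∫⁻ w, f w ∂μ ≤ 1}

/-- Double polar of a set of functions. -/
def biPolar {W : Type*} [MeasurableSpace W] (G : Set (W → ℝ≥0∞)) : Set (W → ℝ≥0∞) :=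
  measPolar (funPolar G)

/-- `F^{⊗n} = { f₁ ⊗ ⋯ ⊗ fₙ | all fᵢ ∈ F }`, where
`(f₁ ⊗ ⋯ ⊗ fₙ)(x) = ∏ i, fᵢ (x i)` on `Fin n → X`. -/
def tensorPow {X : Type*} (F : Set (X → ℝ≥0∞)) (n : ℕ) : Set ((Fin n → X) → ℝ≥0∞) :=
  {g | ∃ f : Fin n → X → ℝ≥0∞, (∀ i, f i ∈ F) ∧ g = fun x => ∏ i, f i (x i)}

/-- The barycentre `s_n(g)(x) = (n!)⁻¹ Σ_{σ ∈ Perm (Fin n)} g (x ∘ σ)`. -/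
noncomputable def bary {X : Type*} (n : ℕ) (g : (Fin n → X) → ℝ≥0∞) :
    (Fin n → X) → ℝ≥0∞ :=
  fun x => (n.factorial : ℝ≥0∞)⁻¹ * ∑ σ : Equiv.Perm (Fin n), g (x ∘ σ)


/-- The setoid on `Fin n → X` identifying tuples up to permutation of coordinates. -/
def symSetoid (X : Type*) (n : ℕ) : Setoid (Fin n → X) where
  r x y := ∃ σ : Equiv.Perm (Fin n), x ∘ σ = y
  iseqv := by
    refine ⟨fun x => ⟨1, ?_⟩, ?_, ?_⟩
    · funext i; simp
    · rintro x y ⟨σ, rfl⟩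
      exact ⟨σ⁻¹, by funext i; simp⟩
    · rintro x y z ⟨σ, rfl⟩ ⟨τ, rfl⟩
      exact ⟨σ * τ, by funext i; simp [Equiv.Perm.mul_apply]⟩

/-- The symmetric power `X^{(n)}`: the quotient of `Fin n → X` by permutations. -/
def SymPow (X : Type*) (n : ℕ) : Type _ := Quotient (symSetoid X n)

/-- `X^{(n)}` carries the σ-algebra pushed forward along the quotient map
`F : (Fin n → X) → X^{(n)}`. -/
instance SymPow.instMeasurableSpace (X : Type*) [MeasurableSpace X] (n : ℕ) :
    MeasurableSpace (SymPow X n) :=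
  MeasurableSpace.map (Quotient.mk (symSetoid X n)) inferInstance

/-
The pushforward `F_*` along the quotient map is onto the s-finite measures on `X^{(n)}`: a
preimage of `ν` is `ν` composed with the kernel sending `F x` to the uniform average of the
Dirac masses at the permutations of `x`. Since `∫ G d(F_* μ) = ∫ G ∘ F dμ`, an s-finite `μ`
lies in `V°` exactly when `F_* μ` lies in `{eq\g | g ∈ V}°`, and both inclusions follow by
transporting measures along `F`.
-/

open ProbabilityTheory

namespace SymPow

variable {X : Type*} {n : ℕ}

/-- The quotient map `F : (Fin n → X) → X^{(n)}`. -/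
abbrev mk : (Fin n → X) → SymPow X n := Quotient.mk (symSetoid X n)

lemma mk_comp_perm (x : Fin n → X) (σ : Equiv.Perm (Fin n)) : mk (x ∘ σ) = mk x :=
  Quotient.sound ⟨σ⁻¹, by funext i; simp⟩

variable [MeasurableSpace X]

lemma measurable_mk : Measurable (mk : (Fin n → X) → SymPow X n) := fun _ h => h

lemma measurable_of_comp_mk {G : SymPow X n → ℝ≥0∞} {g : (Fin n → X) → ℝ≥0∞}
    (hg : Measurable g) (hG : ∀ x, G (mk x) = g x) : Measurable G := by
  rwa [show g = G ∘ mk from funext fun x => (hG x).symm] at hg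

lemma lintegral_map_mk {μ : Measure (Fin n → X)} {G : SymPow X n → ℝ≥0∞}
    {g : (Fin n → X) → ℝ≥0∞} (hg : Measurable g) (hG : ∀ x, G (mk x) = g x) :
    ∫⁻ z, G z ∂μ.map mk = ∫⁻ x, g x ∂μ := by
  rw [lintegral_map (measurable_of_comp_mk hg hG) measurable_mk]
  exact lintegral_congr hG

noncomputable def symmetrize (x : Fin n → X) : Measure (Fin n → X) :=
  (n.factorial : ℝ≥0∞)⁻¹ • ∑ σ : Equiv.Perm (Fin n), Measure.dirac (x ∘ σ)

lemma symmetrize_comp_perm (x : Fin n → X) (τ : Equiv.Perm (Fin n)) :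
    symmetrize (x ∘ τ) = symmetrize x := by
  unfold symmetrize
  congr 1
  exact Fintype.sum_equiv (Equiv.mulLeft τ) _ _ fun σ => rfl

lemma measurable_symmetrize : Measurable (symmetrize : (Fin n → X) → Measure (Fin n → X)) := by
  have h (σ : Equiv.Perm (Fin n)) : Measurable fun x : Fin n → X => Measure.dirac (x ∘ σ) :=
    Measure.measurable_dirac.comp (measurable_pi_lambda _ fun i => measurable_pi_apply (σ i))
  refine Measure.measurable_of_measurable_coe _ fun s hs => ?_
  simp only [symmetrize, Measure.smul_apply, smul_eq_mul]
  exact ((Measure.measurable_coe hs).comp (Finset.measurable_sum _ fun σ _ => h σ)).const_mul _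

lemma map_mk_symmetrize (x : Fin n → X) : (symmetrize x).map mk = Measure.dirac (mk x) := by
  rw [← Measure.mapₗ_apply_of_measurable measurable_mk, symmetrize, LinearMap.map_smul, map_sum]
  simp only [Measure.mapₗ_apply_of_measurable measurable_mk, Measure.map_dirac' measurable_mk,
    mk_comp_perm]
  rw [Finset.sum_const, Finset.card_univ, Fintype.card_perm, Fintype.card_fin,
    ← Nat.cast_smul_eq_nsmul ℝ≥0∞, smul_smul,
    ENNReal.inv_mul_cancel (by exact_mod_cast n.factorial_ne_zero) (ENNReal.natCast_ne_top _),
    one_smul]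

/-- Averaging over the fibre makes this section of `mk` measurable, which `Quotient.out` need
not be. -/
noncomputable def symmetrizeKernel : Kernel (SymPow X n) (Fin n → X) where
  toFun := Quotient.lift symmetrize fun _ _ ⟨σ, hσ⟩ => hσ ▸ (symmetrize_comp_perm _ σ).symm
  measurable' := fun _ hT => measurable_symmetrize hT

lemma map_symmetrizeKernel : symmetrizeKernel.map mk = Kernel.id (α := SymPow X n) := by
  ext1 z
  rw [Kernel.map_apply _ measurable_mk, Kernel.id_apply]
  induction z using Quotient.ind with
  | _ x => exact map_mk_symmetrize x

instance : IsMarkovKernel (symmetrizeKernel (X := X) (n := n)) where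
  isProbabilityMeasure z := ⟨by
    rw [← Set.preimage_univ (f := mk), ← Measure.map_apply measurable_mk .univ,
      ← Kernel.map_apply _ measurable_mk, map_symmetrizeKernel, Kernel.id_apply, measure_univ]⟩

lemma exists_sFinite_map_mk_eq (ν : Measure (SymPow X n)) [SFinite ν] :
    ∃ μ : Measure (Fin n → X), SFinite μ ∧ μ.map mk = ν :=
  ⟨symmetrizeKernel ∘ₘ ν, inferInstance, by
    rw [Measure.map_comp _ _ measurable_mk, map_symmetrizeKernel, Measure.id_comp]⟩

/-- `{eq\g | g ∈ V}` in the notation of the statement. -/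
def descentSet (V : Set ((Fin n → X) → ℝ≥0∞)) : Set (SymPow X n → ℝ≥0∞) :=
  {G | ∃ g ∈ V, ∀ x, G (mk x) = g x}

lemma map_mk_mem_funPolar_descentSet_iff {V : Set ((Fin n → X) → ℝ≥0∞)}
    (hV : ∀ g ∈ V, Measurable g ∧ ∀ (σ : Equiv.Perm (Fin n)) x, g (x ∘ σ) = g x)
    {μ : Measure (Fin n → X)} [SFinite μ] :
    μ.map mk ∈ funPolar (descentSet V) ↔ μ ∈ funPolar V := by
  refine ⟨fun ⟨_, hμ⟩ => ⟨‹_›, fun g hg => ?_⟩, fun ⟨_, hμ⟩ => ⟨inferInstance, ?_⟩⟩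
  · let G : SymPow X n → ℝ≥0∞ :=
      Quotient.lift g fun _ _ ⟨σ, hσ⟩ => hσ ▸ ((hV g hg).2 σ _).symm
    rw [← lintegral_map_mk (G := G) (hV g hg).1 fun _ => rfl]
    exact hμ G ⟨g, hg, fun _ => rfl⟩
  · rintro G ⟨g, hg, hG⟩
    rw [lintegral_map_mk (hV g hg).1 hG]
    exact hμ g hg

end SymPow

/-- for a set `V` of symmetric measurable functions on `Fin n → X`,
the descents to the symmetric power `X^{(n)}` of the symmetric members of `V°°`
form exactly the double polar (on `X^{(n)}`) of the set of descents of members of `V`. -/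
theorem descent_biPolar_eq
    {X : Type*} [MeasurableSpace X] (n : ℕ)
    (V : Set ((Fin n → X) → ℝ≥0∞))
    (hV : ∀ g ∈ V, Measurable g ∧ ∀ (σ : Equiv.Perm (Fin n)) (x : Fin n → X), g (x ∘ σ) = g x) :
    {G : SymPow X n → ℝ≥0∞ | ∃ g, g ∈ biPolar V ∧
        (∀ (σ : Equiv.Perm (Fin n)) (x : Fin n → X), g (x ∘ σ) = g x) ∧
        ∀ x : Fin n → X, G (Quotient.mk (symSetoid X n) x) = g x} =
      biPolar {G : SymPow X n → ℝ≥0∞ | ∃ g ∈ V,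
        ∀ x : Fin n → X, G (Quotient.mk (symSetoid X n) x) = g x} := by
  ext G
  constructor
  · rintro ⟨g, ⟨hgm, hg⟩, -, hG⟩
    refine ⟨SymPow.measurable_of_comp_mk hgm hG, fun ν hν => ?_⟩
    have := hν.1
    obtain ⟨μ, _, rfl⟩ := SymPow.exists_sFinite_map_mk_eq ν
    rw [SymPow.lintegral_map_mk hgm hG]
    exact hg μ ((SymPow.map_mk_mem_funPolar_descentSet_iff hV).1 hν)
  · rintro ⟨hGm, hG⟩
    have hgm : Measurable (G ∘ SymPow.mk) := hGm.comp SymPow.measurable_mk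
    refine ⟨G ∘ SymPow.mk, ⟨hgm, fun μ hμ => ?_⟩,
      fun σ x => congrArg G (SymPow.mk_comp_perm x σ), fun _ => rfl⟩
    have := hμ.1
    rw [← SymPow.lintegral_map_mk hgm fun _ => rfl]
    exact hG _ ((SymPow.map_mk_mem_funPolar_descentSet_iff hV).2 hμ)
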